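/- arXiv:1304.0801 — 2 statements merged into one kernel-verified Lean document; each statement's English description precedes it below -/
import Mathlib

section
/- Let p(z)=Σ_{k≥0} a_k z^k and q(z)=Σ_{k≥0} b_k z^k be real formal power series with a_0 = 1. Define recursively p_0 := p, p_{−1} := q, β_m := the 2×2 minor of H(p_m, p_{m−1}) on rows {2,3} and columns {2,3}, and, whenever β_m ≠ 0, p_{m+1}(z) := (p_{m−1}(z) − p_{m−1}(0)·p_m(z))/(β_m z). If k ≥ 3 and β_0, β_1, …, β_{k−4} are all nonzero (so that β_0,…,β_{k−3} are defined), then the principal minor H^{(k)} of H(p,q) on rows and columns 2,…,k satisfies H^{(k)} = ∏_{i=0}^{k−3} β_i^{⌊(k−1−i)/2⌋}. -/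
/-!
If `u₀ = 1` and `v - v₀ u = β z w`, subtracting `v₀` times each row of `H(u,v)` coming from `u`
from the next row (which comes from `v`) leaves the determinant unchanged and turns the `v`-rows
into `β` times the `w`-rows of `H(w,u)`, shifted by one column. The first column of the
leading block of `H(w,u)` is then `(u₀, 0, …, 0)`, so
`H^{(n+2)}(u,v) = β^{⌊(n+1)/2⌋} H^{(n+1)}(w,u)`. Along the Euclid-type sequence
`(u,v) = (p_m, p_{m-1})`, `w = p_{m+1}` and `β = β_m`, and iterating this down to the
`2 × 2` minor `β_{k-3}` gives the product formula.
-/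

noncomputable section

/-- Coefficient extraction from a sequence, zero for negative indices. -/
def coeffZ (f : ℕ → ℝ) (n : ℤ) : ℝ := if 0 ≤ n then f n.toNat else 0

/-- The infinite Hurwitz-type matrix `H(u,v)` of the pair of series with coefficient
sequences `u`, `v`, using 0-based indices: row `2j` is `(…, v_{c-j}, …)` and row `2j+1`
is `(…, u_{c-j-1}, …)`. -/
def Hmat (u v : ℕ → ℝ) (r c : ℕ) : ℝ :=
  if r % 2 = 0 then coeffZ v ((c : ℤ) - (r / 2 : ℕ)) else coeffZ u ((c : ℤ) - (r / 2 : ℕ) - 1)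

/-- The sequence of formal power series from the Euclid-type algorithm, with the index
shifted by one: `pSeq a b 0 = q = p₋₁`, `pSeq a b 1 = p = p₀`, and
`pSeq a b (m+2) = p_{m+1}`, where
`p_{m+1}(z) = (p_{m-1}(z) - p_{m-1}(0)·p_m(z)) / (β_m z)` and `β_m` is the 2×2 minor of
`H(p_m, p_{m-1})` on rows `{2,3}` and columns `{2,3}` (1-based), which equals
`(p_m)₀·(p_{m-1})₁ - (p_m)₁·(p_{m-1})₀`. -/
def pSeq (a b : ℕ → ℝ) : ℕ → ℕ → ℝ
  | 0 => b
  | 1 => a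
  | m + 2 => fun k =>
      (pSeq a b m (k + 1) - pSeq a b m 0 * pSeq a b (m + 1) (k + 1)) /
        (pSeq a b (m + 1) 0 * pSeq a b m 1 - pSeq a b (m + 1) 1 * pSeq a b m 0)

/-- `betaSeq a b m` is `β_m`, the 2×2 minor of `H(p_m, p_{m-1})` on rows `{2,3}` and
columns `{2,3}` (1-based). -/
def betaSeq (a b : ℕ → ℝ) (m : ℕ) : ℝ :=
  pSeq a b (m + 1) 0 * pSeq a b m 1 - pSeq a b (m + 1) 1 * pSeq a b m 0

@[simp]
lemma Hmat_two_mul (u v : ℕ → ℝ) (t c : ℕ) : Hmat u v (2 * t) c = coeffZ v ((c : ℤ) - t) := by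
  rw [Hmat, if_pos (by omega), show 2 * t / 2 = t by omega]

@[simp]
lemma Hmat_two_mul_add_one (u v : ℕ → ℝ) (t c : ℕ) :
    Hmat u v (2 * t + 1) c = coeffZ u ((c : ℤ) - t - 1) := by
  rw [Hmat, if_neg (by omega), show (2 * t + 1) / 2 = t by omega]

lemma Hmat_succ_zero (u v : ℕ → ℝ) (r : ℕ) : Hmat u v (r + 1) 0 = 0 := by
  obtain ⟨t, rfl | rfl⟩ := Nat.even_or_odd' r
  · rw [Hmat_two_mul_add_one, coeffZ, if_neg (by omega)]
  · rw [show 2 * t + 1 + 1 = 2 * (t + 1) by ring, Hmat_two_mul, coeffZ, if_neg (by omega)]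

lemma Hmat_succ_succ_two_mul (u v w : ℕ → ℝ) (t c : ℕ) :
    Hmat u v (2 * t + 1) (c + 1) = Hmat w u (2 * t) c := by
  simp only [Hmat_two_mul_add_one, Hmat_two_mul]
  congr 1
  push_cast
  ring

lemma coeffZ_sub_mul_coeffZ {u v w : ℕ → ℝ} {β : ℝ} (hu : u 0 = 1)
    (hw : ∀ k, v (k + 1) - v 0 * u (k + 1) = β * w k) (t : ℤ) :
    coeffZ v t - v 0 * coeffZ u t = β * coeffZ w (t - 1) := by
  unfold coeffZ
  split_ifs with h1 h2 h2
  · rw [← hw, show (t - 1).toNat + 1 = t.toNat by omega]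
  · rw [show t.toNat = 0 by omega, hu]
    ring
  · omega
  · ring

lemma Hmat_succ_succ_succ {u v w : ℕ → ℝ} {β : ℝ} (hu : u 0 = 1)
    (hw : ∀ k, v (k + 1) - v 0 * u (k + 1) = β * w k) (r c : ℕ) :
    Hmat u v (r + 1 + 1) (c + 1) =
      (if (r + 1) % 2 = 1 then β else 1) * Hmat w u (r + 1) c +
        (if r % 2 = 0 then v 0 else 0) * Hmat u v (r + 1) (c + 1) := by
  obtain ⟨t, rfl | rfl⟩ := Nat.even_or_odd' r
  · rw [if_pos (by omega), if_pos (by omega), show 2 * t + 1 + 1 = 2 * (t + 1) by ring]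
    simp only [Hmat_two_mul_add_one, Hmat_two_mul]
    have h := coeffZ_sub_mul_coeffZ hu hw ((c : ℤ) - t)
    push_cast
    rw [show (c : ℤ) + 1 - (t + 1) = c - t by ring, show (c : ℤ) + 1 - t - 1 = c - t by ring]
    linarith
  · rw [if_neg (by omega), if_neg (by omega), show 2 * t + 1 + 1 = 2 * (t + 1) by ring,
      Hmat_succ_succ_two_mul u v w]
    ring

lemma prod_range_ite_odd (β : ℝ) (n : ℕ) :
    ∏ i ∈ Finset.range n, (if i % 2 = 1 then β else 1) = β ^ (n / 2) := by
  induction n with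
  | zero => simp
  | succ n ih =>
    rw [Finset.prod_range_succ, ih]
    rcases Nat.mod_two_eq_zero_or_one n with h | h
    · rw [if_neg (by omega), mul_one, show (n + 1) / 2 = n / 2 by omega]
    · rw [if_pos h, ← pow_succ, show (n + 1) / 2 = n / 2 + 1 by omega]

def hurwitzBlock (u v : ℕ → ℝ) (n : ℕ) : Matrix (Fin n) (Fin n) ℝ :=
  Matrix.of fun l m => Hmat u v l m

/-- Rows and columns `1, …, n` (0-based) of `H(u,v)`: the paper's `H^{(k)}` is
`hurwitzMinor p q (k - 1)`. -/
def hurwitzMinor (u v : ℕ → ℝ) (n : ℕ) : Matrix (Fin n) (Fin n) ℝ :=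
  Matrix.of fun l m => Hmat u v ((l : ℕ) + 1) ((m : ℕ) + 1)

lemma det_hurwitzBlock_succ (u v : ℕ → ℝ) (n : ℕ) :
    (hurwitzBlock u v (n + 1)).det = v 0 * (hurwitzMinor u v n).det := by
  rw [Matrix.det_succ_column_zero, Fin.sum_univ_succ]
  have h00 : Hmat u v 0 0 = v 0 := by simpa [coeffZ] using Hmat_two_mul u v 0 0
  simp [hurwitzBlock, hurwitzMinor, Hmat_succ_zero, Matrix.submatrix, h00]

lemma det_hurwitzMinor_succ {u v w : ℕ → ℝ} {β : ℝ} (hu : u 0 = 1)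
    (hw : ∀ k, v (k + 1) - v 0 * u (k + 1) = β * w k) (n : ℕ) :
    (hurwitzMinor u v (n + 1)).det = β ^ ((n + 1) / 2) * (hurwitzBlock w u (n + 1)).det := by
  have hrows : (hurwitzMinor u v (n + 1)).det =
      (Matrix.of fun l m : Fin (n + 1) =>
        (if (l : ℕ) % 2 = 1 then β else 1) * hurwitzBlock w u (n + 1) l m).det := by
    refine Matrix.det_eq_of_forall_row_eq_smul_add_pred
      (fun i => if (i : ℕ) % 2 = 0 then v 0 else 0) (fun j => ?_) (fun i j => ?_)
    · simpa [hurwitzMinor, hurwitzBlock] using Hmat_succ_succ_two_mul u v w 0 j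
    · exact Hmat_succ_succ_succ hu hw i j
  rw [hrows, Matrix.det_mul_column,
    Fin.prod_univ_eq_prod_range (fun i => if i % 2 = 1 then β else 1), prod_range_ite_odd]

@[simp]
lemma pSeq_zero (a b : ℕ → ℝ) : pSeq a b 0 = b := rfl

@[simp]
lemma pSeq_one (a b : ℕ → ℝ) : pSeq a b 1 = a := rfl

lemma pSeq_recurrence (a b : ℕ → ℝ) {m : ℕ} (hβ : betaSeq a b m ≠ 0) (k : ℕ) :
    pSeq a b m (k + 1) - pSeq a b m 0 * pSeq a b (m + 1) (k + 1) =
      betaSeq a b m * pSeq a b (m + 2) k :=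
  (mul_div_cancel₀ _ hβ).symm

lemma pSeq_succ_succ_zero (a b : ℕ → ℝ) {m : ℕ} (h1 : pSeq a b (m + 1) 0 = 1)
    (hβ : betaSeq a b m ≠ 0) : pSeq a b (m + 2) 0 = 1 := by
  have h := pSeq_recurrence a b hβ 0
  rw [show pSeq a b m 1 - pSeq a b m 0 * pSeq a b (m + 1) 1 = betaSeq a b m by
    rw [betaSeq, h1]; ring] at h
  exact (mul_eq_left₀ hβ).mp h.symm

lemma det_hurwitzMinor_pSeq (a b : ℕ → ℝ) : ∀ n m : ℕ, pSeq a b (m + 1) 0 = 1 →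
    (∀ i, i + 3 ≤ n → betaSeq a b (m + i) ≠ 0) →
    (hurwitzMinor (pSeq a b (m + 1)) (pSeq a b m) n).det =
      ∏ i ∈ Finset.range (n - 1), betaSeq a b (m + i) ^ ((n - i) / 2)
  | 0, _, _, _ => by simp
  | 1, _, h1, _ => by simp [hurwitzMinor, Hmat, coeffZ, h1]
  | 2, m, _, _ => by
    rw [Matrix.det_fin_two]
    simp [hurwitzMinor, Hmat, coeffZ, betaSeq]
  | n + 3, m, h1, hβ => by
    have hβm : betaSeq a b m ≠ 0 := hβ 0 (by omega)
    rw [det_hurwitzMinor_succ h1 (pSeq_recurrence a b hβm), det_hurwitzBlock_succ,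
      det_hurwitzMinor_pSeq a b (n + 2) (m + 1) (pSeq_succ_succ_zero a b h1 hβm)
        (fun i hi => by simpa [add_assoc, add_comm 1] using hβ (i + 1) (by omega)),
      h1, one_mul, show n + 3 - 1 = n + 1 + 1 by rfl, Finset.prod_range_succ' _ (n + 1), mul_comm]
    congr 1
    refine Finset.prod_congr rfl fun i _ => ?_
    rw [show m + (i + 1) = m + 1 + i by ring, show n + 3 - (i + 1) = n + 2 - i by omega]

theorem stmt6_general (a b : ℕ → ℝ) (ha0 : a 0 = 1) (k : ℕ)
    (hβ : ∀ i : ℕ, i + 4 ≤ k → betaSeq a b i ≠ 0) :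
    (Matrix.of fun l m : Fin (k - 1) => Hmat a b ((l : ℕ) + 1) ((m : ℕ) + 1)).det =
      ∏ i ∈ Finset.range (k - 2), betaSeq a b i ^ ((k - 1 - i) / 2) := by
  have h := det_hurwitzMinor_pSeq a b (k - 1) 0 ha0
    (fun i hi => by simpa using hβ i (by omega))
  simpa [Nat.sub_sub, hurwitzMinor] using h

/-- If `k ≥ 3` and `β₀, …, β_{k-4}` are all nonzero, then the principal minor `H^{(k)}`
of `H(p,q)` (on rows and columns `2,…,k`, 1-based; here rows and columns `1,…,k-1`,
0-based) equals `∏_{i=0}^{k-3} β_i^{⌊(k-1-i)/2⌋}`. -/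
theorem stmt6 (a b : ℕ → ℝ) (ha0 : a 0 = 1) (k : ℕ) (hk : 3 ≤ k)
    (hβ : ∀ i : ℕ, i + 4 ≤ k → betaSeq a b i ≠ 0) :
    (Matrix.of fun l m : Fin (k - 1) => Hmat a b ((l : ℕ) + 1) ((m : ℕ) + 1)).det =
      ∏ i ∈ Finset.range (k - 2), betaSeq a b i ^ ((k - 1 - i) / 2) :=
  stmt6_general a b ha0 k hβ

end
end

section
/- Let p, q and g be real formal power series with g(0) = 1, and let p̃ := p/g and q̃ := q/g be the formal power series quotients (so p = p̃·g and q = q̃·g). Then H(p,q) = H(p̃,q̃) · T(g), where the matrix product is entrywise well-defined because each column of the upper-triangular Toeplitz matrix T(g) has only finitely many nonzero entries. -/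
/-
Write `p = p̃ g`. Since `T(g)` is upper triangular, the `(r, c)` entry of `H(p̃, q̃) T(g)` is the
finite sum `∑_{l ≤ c} H(p̃, q̃)_{r,l} g_{c-l}`. Row `r` of a Hurwitz-type matrix is a coefficient
sequence shifted right by `j = ⌊r/2⌋` (or `j + 1`), and the sum is the `(c - j)`-th coefficient of
the Cauchy product `p̃ g = p` (resp. `q̃ g = q`), its terms with `l < j` vanishing.
-/

noncomputable section

/-- The upper-triangular Toeplitz matrix `T(g)` of a coefficient sequence `g`
(0-based indices): `T(g)_{r,c} = g_{c-r}` (zero when `c < r`). -/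
def Tmat (g : ℕ → ℝ) (r c : ℕ) : ℝ := coeffZ g ((c : ℤ) - (r : ℤ))

/-- Product of infinite matrices (defined via `tsum`; here each column of `T(g)` has
finitely many nonzero entries, so the sums are finite). -/
def matMul (A B : ℕ → ℕ → ℝ) (r c : ℕ) : ℝ := ∑' l, A r l * B l c

lemma coeffZ_natCast (f : ℕ → ℝ) (n : ℕ) : coeffZ f n = f n := by
  simp [coeffZ]

lemma coeffZ_of_neg (f : ℕ → ℝ) {n : ℤ} (hn : n < 0) : coeffZ f n = 0 :=
  if_neg (not_le.mpr hn)

lemma Tmat_of_lt (g : ℕ → ℝ) {r c : ℕ} (h : c < r) : Tmat g r c = 0 :=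
  coeffZ_of_neg g (by omega)

lemma matMul_Tmat_eq_sum (A : ℕ → ℕ → ℝ) (g : ℕ → ℝ) (r c : ℕ) :
    matMul A (Tmat g) r c = ∑ l ∈ Finset.range (c + 1), A r l * Tmat g l c :=
  tsum_eq_sum fun l hl => by
    rw [Tmat_of_lt g (by simpa [Nat.lt_succ_iff] using hl), mul_zero]

lemma coeffZ_sub_eq_sum_of_cauchy {f ft g : ℕ → ℝ}
    (hf : ∀ n, f n = ∑ i ∈ Finset.range (n + 1), ft i * g (n - i)) (j c : ℕ) :
    coeffZ f ((c : ℤ) - j) =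
      ∑ l ∈ Finset.range (c + 1), coeffZ ft ((l : ℤ) - j) * coeffZ g ((c : ℤ) - l) := by
  rcases lt_or_ge c j with hcj | hjc
  · rw [coeffZ_of_neg f (by omega)]
    refine (Finset.sum_eq_zero fun l hl => ?_).symm
    rw [coeffZ_of_neg ft (by simp at hl; omega), zero_mul]
  obtain ⟨m, rfl⟩ := Nat.exists_eq_add_of_le hjc
  have hlow :
      ∑ l ∈ Finset.range j, coeffZ ft ((l : ℤ) - j) * coeffZ g ((j + m : ℕ) - (l : ℤ)) = 0 :=
    Finset.sum_eq_zero fun l hl => by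
      rw [coeffZ_of_neg ft (by simp at hl; omega), zero_mul]
  rw [show ((j + m : ℕ) : ℤ) - j = (m : ℕ) by push_cast; ring, coeffZ_natCast, hf,
    show j + m + 1 = j + (m + 1) by ring, Finset.sum_range_add _ j (m + 1), hlow, zero_add]
  refine Finset.sum_congr rfl fun i hi => ?_
  have him : i ≤ m := Nat.lt_succ_iff.mp (Finset.mem_range.mp hi)
  rw [show ((j + i : ℕ) : ℤ) - j = (i : ℕ) by push_cast; ring,
    show ((j + m : ℕ) : ℤ) - (j + i : ℕ) = (m - i : ℕ) by push_cast [him]; ring,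
    coeffZ_natCast, coeffZ_natCast]

theorem stmt18_general (a b g pt qt : ℕ → ℝ)
    (ha : ∀ n, a n = ∑ i ∈ Finset.range (n + 1), pt i * g (n - i))
    (hb : ∀ n, b n = ∑ i ∈ Finset.range (n + 1), qt i * g (n - i)) :
    ∀ r c : ℕ, Hmat a b r c = matMul (Hmat pt qt) (Tmat g) r c := by
  intro r c
  rw [matMul_Tmat_eq_sum]
  unfold Hmat Tmat
  split_ifs
  · exact coeffZ_sub_eq_sum_of_cauchy hb (r / 2) c
  · simpa only [sub_sub, Nat.cast_succ] using coeffZ_sub_eq_sum_of_cauchy ha (r / 2 + 1) c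

/-- If `g(0) = 1` and `p = p̃·g`, `q = q̃·g` as formal power series (Cauchy products),
then `H(p,q) = H(p̃,q̃) · T(g)`. -/
theorem stmt18 (a b g pt qt : ℕ → ℝ) (hg0 : g 0 = 1)
    (ha : ∀ n, a n = ∑ i ∈ Finset.range (n + 1), pt i * g (n - i))
    (hb : ∀ n, b n = ∑ i ∈ Finset.range (n + 1), qt i * g (n - i)) :
    ∀ r c : ℕ, Hmat a b r c = matMul (Hmat pt qt) (Tmat g) r c :=
  stmt18_general a b g pt qt ha hb

end
end
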